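/- Let A ⊆ A' be a finite subintegral extension of noetherian commutative rings of prime characteristic p (i.e., A' is a finite A-module, the induced map Spec(A') → Spec(A) is bijective, and it induces isomorphisms on all residue fields). Then there exists m ≥ 0 such that x^(p^m) ∈ A for every x ∈ A'. -/

import Mathlib

/-!
Write `A + J` for `Algebra.adjoin A J`, the subring of elements congruent modulo the ideal
`J` to an element of `A`. By noetherian induction on `J`, some `p ^ m`-th power of every
element lies in `A + J`; for `J = 0` this is the theorem.

If `J` is not closed under `p`-th roots, its Frobenius preimage `K ⊋ J` satisfies
`k ^ p ∈ J` for `k ∈ K`, so `p`-th powers of elements of `A + K` lie in `A + J`. Otherwise `J` is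
radical, and we find `t ∉ J` in the conductor of `A + J`, so that `A + (J + (t)) = A + J`.
Let `P₁` be a minimal prime of `J` whose contraction to `A` is minimal; injectivity on
spectra and prime avoidance give `u ∈ A` lying in every other minimal prime of `J` but not
in `P₁`. Triviality of the residue field at `P₁` gives, for each generator of the finite
`A`-module `A'`, a denominator in `A \ P₁`; their product `b` satisfies `b A' ⊆ A + P₁`.
Then `t = u b` works, as `J` is the intersection of its minimal primes.
-/

/-- A ring homomorphism induces trivial residue field extensions: for every prime `P`
of the target, every element of the residue field at `P` can be written as a fraction
of elements coming from the residue field at the contracted prime.  (For quotients by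
primes, which are domains, this says exactly that the induced map on residue fields,
i.e. fraction fields of the quotients, is an isomorphism.) -/
def ResidueFieldsTrivial {A A' : Type*} [CommRing A] [CommRing A'] (f : A →+* A') : Prop :=
  ∀ (P : Ideal A'), P.IsPrime → ∀ x : A' ⧸ P,
    ∃ a b : A ⧸ (P.comap f), b ≠ 0 ∧
      Ideal.quotientMap P f le_rfl b * x = Ideal.quotientMap P f le_rfl a

/-- A ring homomorphism is subintegral if it is integral, induces a bijection on prime
spectra, and induces isomorphisms on all residue fields. -/
def RingHom.IsSubintegral {A A' : Type*} [CommRing A] [CommRing A'] (f : A →+* A') : Prop :=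
  f.IsIntegral ∧
    Function.Bijective (fun P : PrimeSpectrum A' => PrimeSpectrum.comap f P) ∧
    ResidueFieldsTrivial f

open Algebra

section

variable {A R : Type*} [CommRing A] [CommRing R] [Algebra A R]

namespace Subalgebra

def conductor (S : Subalgebra A R) : Ideal R where
  carrier := {t | ∀ x, t * x ∈ S}
  zero_mem' x := by simp only [zero_mul, zero_mem]
  add_mem' ha hb x := by simpa only [add_mul] using S.add_mem (ha x) (hb x)
  smul_mem' c t ht x := by
    rw [smul_eq_mul, mul_assoc, mul_left_comm]
    exact ht (c * x)

theorem coe_conductor_subset (S : Subalgebra A R) : (S.conductor : Set R) ⊆ S :=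
  fun t ht => by simpa only [mul_one, SetLike.mem_coe] using ht 1

end Subalgebra

theorem Algebra.mem_adjoin_ideal_iff {J : Ideal R} {x : R} :
    x ∈ adjoin A (J : Set R) ↔ ∃ a : A, x - algebraMap A R a ∈ J := by
  refine ⟨fun hx => ?_, fun ⟨a, ha⟩ => ?_⟩
  · have hle : adjoin A (J : Set R) ≤
        (⊥ : Subalgebra A (R ⧸ J)).comap (Ideal.Quotient.mkₐ A J) :=
      adjoin_le fun j hj => by
        simpa [Ideal.Quotient.eq_zero_iff_mem.mpr hj] using ⟨0, map_zero _⟩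
    obtain ⟨a, ha⟩ := Algebra.mem_bot.mp (hle hx)
    refine ⟨a, Ideal.Quotient.eq.mp ?_⟩
    simpa [Ideal.Quotient.mkₐ_eq_mk] using ha.symm
  · simpa using add_mem (algebraMap_mem (adjoin A (J : Set R)) a) (subset_adjoin ha)

theorem Algebra.adjoin_le_of_le_conductor {J K : Ideal R}
    (hK : K ≤ (adjoin A (J : Set R)).conductor) :
    adjoin A (K : Set R) ≤ adjoin A (J : Set R) :=
  adjoin_le (Set.Subset.trans hK (Subalgebra.coe_conductor_subset _))

theorem ResidueFieldsTrivial.exists_mul_mem_adjoin (h : ResidueFieldsTrivial (algebraMap A R))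
    (P : Ideal R) [P.IsPrime] (x : R) :
    ∃ b ∉ P.comap (algebraMap A R), algebraMap A R b * x ∈ adjoin A (P : Set R) := by
  obtain ⟨a, b, hb, hab⟩ := h P ‹_› (Ideal.Quotient.mk P x)
  obtain ⟨b, rfl⟩ := Ideal.Quotient.mk_surjective b
  obtain ⟨a, rfl⟩ := Ideal.Quotient.mk_surjective a
  refine ⟨b, fun hbP => hb (Ideal.Quotient.eq_zero_iff_mem.mpr hbP),
    mem_adjoin_ideal_iff.mpr ⟨a, ?_⟩⟩
  rw [Ideal.quotientMap_mk, Ideal.quotientMap_mk, ← map_mul] at hab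
  exact Ideal.Quotient.eq.mp hab

theorem Subalgebra.exists_algebraMap_mem_conductor [Module.Finite A R] (S : Subalgebra A R)
    {Q : Ideal A} (hQ : Q.IsPrime) (h : ∀ x : R, ∃ b ∉ Q, algebraMap A R b * x ∈ S) :
    ∃ b ∉ Q, algebraMap A R b ∈ S.conductor := by
  obtain ⟨s, hs⟩ := Module.finite_def.mp ‹Module.Finite A R›
  have hcolon : (Subalgebra.toSubmodule S).colon (s : Set R) =
      s.inf fun e => (Subalgebra.toSubmodule S).colon {e} := by
    ext b
    simp [Submodule.mem_colon, Submodule.mem_finsetInf]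
  have hnot : ¬ (Subalgebra.toSubmodule S).colon (s : Set R) ≤ Q := by
    rw [hcolon, hQ.inf_le']
    rintro ⟨e, -, he⟩
    obtain ⟨b, hbQ, hb⟩ := h e
    exact hbQ (he (by simpa [Algebra.smul_def] using hb))
  obtain ⟨b, hb, hbQ⟩ := SetLike.not_le_iff_exists.mp hnot
  refine ⟨b, hbQ, fun x => ?_⟩
  rw [← Submodule.colon_span, hs] at hb
  simpa [Algebra.smul_def] using Submodule.mem_colon.mp hb x trivial

theorem exists_algebraMap_separating_minimalPrime [IsNoetherianRing R]
    (hinj : Function.Injective (PrimeSpectrum.comap (algebraMap A R))) {J : Ideal R}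
    (hJ : J ≠ ⊤) :
    ∃ P₁ ∈ J.minimalPrimes, ∃ u : A, algebraMap A R u ∉ P₁ ∧
      ∀ P ∈ J.minimalPrimes, P ≠ P₁ → algebraMap A R u ∈ P := by
  classical
  set f := algebraMap A R
  have hfin := J.finite_minimalPrimes_of_isNoetherianRing R
  obtain ⟨P₁, hP₁, hmin⟩ := hfin.exists_minimalFor (Ideal.comap f) _
    (Set.nonempty_coe_sort.mp (Ideal.nonempty_minimalPrimes hJ))
  have hP₁prime : P₁.IsPrime := hP₁.1.1
  have hincomp : ∀ P ∈ hfin.toFinset.erase P₁, ¬ P.comap f ≤ P₁.comap f := by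
    intro P hP hle
    rw [Finset.mem_erase, Set.Finite.mem_toFinset] at hP
    refine hP.1 (congrArg PrimeSpectrum.asIdeal (@hinj ⟨P, hP.2.1.1⟩ ⟨P₁, hP₁prime⟩ ?_))
    exact PrimeSpectrum.ext (le_antisymm hle (hmin hP.2 hle))
  have hnot : ¬ (hfin.toFinset.erase P₁).inf (Ideal.comap f) ≤ P₁.comap f := by
    rw [(Ideal.IsPrime.comap f).inf_le']
    rintro ⟨P, hP, hle⟩
    exact hincomp P hP hle
  obtain ⟨u, hu, huP₁⟩ := SetLike.not_le_iff_exists.mp hnot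
  refine ⟨P₁, hP₁, u, huP₁, fun P hP hne => ?_⟩
  exact Submodule.mem_finsetInf.mp hu P (by simp [hne, hP])

theorem lt_conductor_adjoin_of_isRadical [IsNoetherianRing R] [Module.Finite A R]
    (hinj : Function.Injective (PrimeSpectrum.comap (algebraMap A R)))
    (hres : ResidueFieldsTrivial (algebraMap A R)) {J : Ideal R} (hJ : J.IsRadical)
    (hJtop : J ≠ ⊤) :
    J < (adjoin A (J : Set R)).conductor := by
  set f := algebraMap A R
  obtain ⟨P₁, hP₁, u, huP₁, hu⟩ := exists_algebraMap_separating_minimalPrime hinj hJtop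
  have hP₁prime : P₁.IsPrime := hP₁.1.1
  obtain ⟨b, hbP₁, hb⟩ := (adjoin A (P₁ : Set R)).exists_algebraMap_mem_conductor
    (Ideal.IsPrime.comap f) (hres.exists_mul_mem_adjoin P₁)
  have hJle : J ≤ (adjoin A (J : Set R)).conductor := fun j hj x =>
    subset_adjoin (J.mul_mem_right x hj)
  refine SetLike.lt_iff_le_and_exists.mpr ⟨hJle, f (u * b), fun x => ?_, fun hJ' => ?_⟩
  · obtain ⟨a, ha⟩ := mem_adjoin_ideal_iff.mp (hb x)
    refine mem_adjoin_ideal_iff.mpr ⟨u * a, ?_⟩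
    have hmem : f u * (f b * x - f a) ∈ sInf J.minimalPrimes := by
      refine Submodule.mem_sInf.mpr fun P hP => ?_
      by_cases hPP₁ : P = P₁
      · exact hPP₁ ▸ P₁.mul_mem_left _ ha
      · exact Ideal.mul_mem_right _ P (hu P hP hPP₁)
    rw [Ideal.sInf_minimalPrimes, hJ.radical] at hmem
    convert hmem using 1
    simp only [map_mul]
    ring
  · rw [map_mul] at hJ'
    rcases hP₁prime.mem_or_mem (hP₁.1.2 hJ') with h | h
    · exact huP₁ h
    · exact hbP₁ h

section CharP

variable (p : ℕ) [Fact p.Prime] [CharP R p]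

theorem Ideal.le_comap_frobenius (J : Ideal R) : J ≤ J.comap (frobenius R p) :=
  fun x hx => by simpa [frobenius_def] using J.pow_mem_of_mem hx p (Fact.out : p.Prime).pos

theorem Ideal.isRadical_of_comap_frobenius_le {J : Ideal R} (h : J.comap (frobenius R p) ≤ J) :
    J.IsRadical := by
  have descend : ∀ k (x : R), x ^ p ^ k ∈ J → x ∈ J := by
    intro k
    induction k with
    | zero => simp
    | succ k ih =>
      intro x hx
      rw [pow_succ, pow_mul] at hx
      exact ih x (h (by simpa [frobenius_def] using hx))
  rintro x ⟨n, hn⟩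
  exact descend n x (J.pow_mem_of_pow_mem hn (Nat.lt_pow_self (Fact.out : p.Prime).one_lt).le)

theorem pow_mem_adjoin_of_le_comap_frobenius {J K : Ideal R} (hK : K ≤ J.comap (frobenius R p))
    {x : R} (hx : x ∈ adjoin A (K : Set R)) : x ^ p ∈ adjoin A (J : Set R) := by
  obtain ⟨a, ha⟩ := mem_adjoin_ideal_iff.mp hx
  refine mem_adjoin_ideal_iff.mpr ⟨a ^ p, ?_⟩
  simpa [frobenius_def, sub_pow_char] using hK ha

theorem exists_pow_mem_adjoin_ideal [IsNoetherianRing R]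
    (hrad : ∀ J : Ideal R, J.IsRadical → J ≠ ⊤ → J < (adjoin A (J : Set R)).conductor)
    (J : Ideal R) : ∃ m : ℕ, ∀ x : R, x ^ p ^ m ∈ adjoin A (J : Set R) := by
  induction J using IsNoetherian.induction with
  | hgt J IH =>
    by_cases hJ : J = ⊤
    · exact ⟨0, fun x => subset_adjoin (by simp [hJ])⟩
    rcases (Ideal.le_comap_frobenius p J).lt_or_eq with hlt | heq
    · obtain ⟨m, hm⟩ := IH _ hlt
      refine ⟨m + 1, fun x => ?_⟩
      rw [pow_succ, pow_mul]
      exact pow_mem_adjoin_of_le_comap_frobenius p le_rfl (hm x)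
    · obtain ⟨m, hm⟩ := IH _ (hrad J (Ideal.isRadical_of_comap_frobenius_le p heq.ge) hJ)
      exact ⟨m, fun x => adjoin_le_of_le_conductor le_rfl (hm x)⟩

end CharP

end

theorem subintegral_pow_char_mem_general
    (p : ℕ) (hp : p.Prime)
    (A' : Type*) [CommRing A'] [IsNoetherianRing A'] [CharP A' p]
    (A : Subring A')
    (hfin : Module.Finite A A')
    (hsub : (algebraMap A A').IsSubintegral) :
    ∃ m : ℕ, ∀ x : A', x ^ p ^ m ∈ A := by
  have : Fact p.Prime := ⟨hp⟩
  obtain ⟨m, hm⟩ := exists_pow_mem_adjoin_ideal (A := A) p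
    (fun J hJ hJtop => lt_conductor_adjoin_of_isRadical hsub.2.1.1 hsub.2.2 hJ hJtop) ⊥
  refine ⟨m, fun x => ?_⟩
  obtain ⟨a, ha⟩ := Algebra.mem_bot.mp (by simpa using hm x)
  exact ha ▸ a.2

/-- Let `A ⊆ A'` be a finite subintegral extension of noetherian
commutative rings of prime characteristic `p`.  Then there exists `m` such that
`x ^ (p ^ m) ∈ A` for every `x ∈ A'`. -/
theorem subintegral_pow_char_mem
    (p : ℕ) (hp : p.Prime)
    (A' : Type*) [CommRing A'] [IsNoetherianRing A'] [CharP A' p]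
    (A : Subring A') (hAnoeth : IsNoetherianRing A)
    (hfin : Module.Finite A A')
    (hsub : (algebraMap A A').IsSubintegral) :
    ∃ m : ℕ, ∀ x : A', x ^ p ^ m ∈ A :=
  subintegral_pow_char_mem_general p hp A' A hfin hsub
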